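/- Let $\sfZ$ be a Markov transition kernel on a countable space $\mathcal{Z}$ with transition matrix $\Pi$, let $\Phi:\mathcal{Z}\to\mathcal{X}$ be a function to a countable space $\mathcal{X}$, let $P$ be a Markov transition matrix on $\mathcal{X}$, and let $K:\mathcal{X}\times\mathcal{Z}\to[0,1]$ satisfy: (i) for every $x\in\mathcal{X}$, $\sum_{z:\Phi(z)=x} K(x,z)=1$ and $K(x,z)=0$ whenever $\Phi(z)\ne x$; (ii) $K\Pi = PK$. If the Markov chain $(Z_n)$ on $\mathcal{Z}$ has initial distribution $K(x,\cdot)$, then the process $X_n := \Phi(Z_n)$ is a Markov chain with respect to its own filtration, with transition matrix $P$ and initial state $x$. -/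

import Mathlib

/-!
Condition the `Π`-chain on the observed path `Φ(Z_0), …, Φ(Z_m) = xs` and track the weight of the
paths ending at each `z`. By induction on `m` this forward weight is `K(xs m, z)` times the
`P`-path weight of `xs`: the step from `m` to `m + 1` is exactly the intertwining `KΠ = PK`,
after the support condition on `K` collapses the sum over `x'` to `x' = xs (m + 1)`. Summing over
the endpoint `z`, where `K(xs m, ·)` has mass one, leaves the `P`-path weight.
-/

open scoped ENNReal Classical

noncomputable section PathWeights

variable {α : Type*} (μ : α → ℝ≥0∞) (Q : α → α → ℝ≥0∞)

def pathWeight {m : ℕ} (as : Fin (m + 1) → α) : ℝ≥0∞ :=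
  μ (as 0) * ∏ k : Fin m, Q (as k.castSucc) (as k.succ)

theorem pathWeight_zero (as : Fin 1 → α) : pathWeight μ Q as = μ (as 0) := by
  simp [pathWeight]

theorem pathWeight_succ {m : ℕ} (as : Fin (m + 2) → α) :
    pathWeight μ Q as =
      pathWeight μ Q (Fin.init as) * Q (as (Fin.last m).castSucc) (as (Fin.last (m + 1))) := by
  simp only [pathWeight, Fin.prod_univ_castSucc, Fin.init, Fin.castSucc_zero, Fin.succ_castSucc,
    Fin.succ_last, mul_assoc]

/-- The forward variable of the forward algorithm for hidden Markov models. -/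
def forwardWeight {m : ℕ} (g : Fin (m + 1) → α → ℝ≥0∞) (a : α) : ℝ≥0∞ :=
  ∑' as : Fin (m + 1) → α,
    pathWeight μ Q as * (∏ k, g k (as k)) * if as (Fin.last m) = a then 1 else 0

theorem tsum_forwardWeight {m : ℕ} (g : Fin (m + 1) → α → ℝ≥0∞) :
    ∑' a, forwardWeight μ Q g a = ∑' as, pathWeight μ Q as * ∏ k, g k (as k) := by
  simp only [forwardWeight]
  rw [ENNReal.tsum_comm]
  simp_rw [ENNReal.tsum_mul_left, tsum_ite_eq', mul_one]

theorem forwardWeight_zero (g : Fin 1 → α → ℝ≥0∞) (a : α) :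
    forwardWeight μ Q g a = μ a * g 0 a := by
  rw [forwardWeight, ← (Equiv.funUnique (Fin 1) α).symm.tsum_eq]
  simp [pathWeight]

theorem forwardWeight_succ {m : ℕ} (g : Fin (m + 2) → α → ℝ≥0∞) (a : α) :
    forwardWeight μ Q g a =
      (∑' b, forwardWeight μ Q (Fin.init g) b * Q b a) * g (Fin.last (m + 1)) a := by
  calc forwardWeight μ Q g a
      = ∑' as : Fin (m + 1) → α, pathWeight μ Q as * (∏ k, Fin.init g k (as k)) *
          Q (as (Fin.last m)) a * g (Fin.last (m + 1)) a := by
        rw [forwardWeight, ← (Fin.snocEquiv fun _ => α).tsum_eq, ENNReal.tsum_prod',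
          ENNReal.tsum_comm]
        have init_snocEquiv (b : α) (bs : Fin (m + 1) → α) :
            Fin.init ((Fin.snocEquiv fun _ => α) (b, bs)) = bs :=
          Fin.init_snoc (α := fun _ => α) ..
        simp only [init_snocEquiv, Fin.snocEquiv_apply, Fin.snoc_last, Fin.snoc_castSucc,
          pathWeight_succ, Fin.prod_univ_castSucc (n := m + 1), mul_ite, mul_one, mul_zero,
          tsum_ite_eq]
        exact tsum_congr fun as => by simp only [Fin.init]; ring
    _ = ∑' as, ∑' b, (pathWeight μ Q as * (∏ k, Fin.init g k (as k)) *
          if as (Fin.last m) = b then 1 else 0) * Q b a * g (Fin.last (m + 1)) a := by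
        simp_rw [mul_ite, ite_mul, mul_one, mul_zero, zero_mul, tsum_ite_eq']
    _ = _ := by
        rw [ENNReal.tsum_comm]
        simp_rw [ENNReal.tsum_mul_right]
        rfl

end PathWeights

section Intertwining

variable {𝒵 𝒳 : Type*} {Pi : 𝒵 → 𝒵 → ℝ≥0∞} {P : 𝒳 → 𝒳 → ℝ≥0∞} {K : 𝒳 → 𝒵 → ℝ≥0∞}
  {Φ : 𝒵 → 𝒳}

theorem mul_ite_fiber_of_support (hKsupp : ∀ x z, Φ z ≠ x → K x z = 0) (x y : 𝒳) (z : 𝒵) :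
    K x z * (if Φ z = y then 1 else 0) = (if y = x then 1 else 0) * K y z := by
  by_cases hzy : Φ z = y
  · subst hzy
    by_cases hzx : Φ z = x
    · simp [hzx]
    · simp [hzx, hKsupp x z hzx]
  · simp [hzy, hKsupp y z hzy]

theorem tsum_mul_ite_fiber_of_intertwining (hKsupp : ∀ x z, Φ z ≠ x → K x z = 0)
    (hinter : ∀ x z', ∑' z, K x z * Pi z z' = ∑' x', P x x' * K x' z') (y y' : 𝒳) (z : 𝒵) :
    (∑' w, K y w * Pi w z) * (if Φ z = y' then 1 else 0) = P y y' * K y' z := by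
  rw [hinter, ← ENNReal.tsum_mul_right]
  simp_rw [mul_assoc, mul_ite_fiber_of_support hKsupp, ite_mul, one_mul, zero_mul, mul_ite,
    mul_zero, tsum_ite_eq']

theorem forwardWeight_fibers_of_intertwining (hKsupp : ∀ x z, Φ z ≠ x → K x z = 0)
    (hinter : ∀ x z', ∑' z, K x z * Pi z z' = ∑' x', P x x' * K x' z') (x : 𝒳) :
    ∀ (m : ℕ) (xs : Fin (m + 1) → 𝒳) (z : 𝒵),
      forwardWeight (K x) Pi (fun k z => if Φ z = xs k then 1 else 0) z =
        pathWeight (fun y => if y = x then 1 else 0) P xs * K (xs (Fin.last m)) z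
  | 0, xs, z => by
    rw [forwardWeight_zero, mul_ite_fiber_of_support hKsupp, pathWeight_zero]
    rfl
  | m + 1, xs, z => by
    have ih : ∀ w, forwardWeight (K x) Pi (Fin.init fun k z => if Φ z = xs k then 1 else 0) w =
        pathWeight (fun y => if y = x then 1 else 0) P (Fin.init xs) *
          K (xs (Fin.last m).castSucc) w :=
      forwardWeight_fibers_of_intertwining hKsupp hinter x m (Fin.init xs)
    calc forwardWeight (K x) Pi (fun k z => if Φ z = xs k then 1 else 0) z
        = pathWeight (fun y => if y = x then 1 else 0) P (Fin.init xs) *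
            ((∑' w, K (xs (Fin.last m).castSucc) w * Pi w z) *
              if Φ z = xs (Fin.last (m + 1)) then 1 else 0) := by
          simp only [forwardWeight_succ, ih, mul_assoc, ENNReal.tsum_mul_left]
      _ = _ := by
          rw [tsum_mul_ite_fiber_of_intertwining hKsupp hinter, pathWeight_succ, mul_assoc]

end Intertwining

/-- The Markov property of `Φ(Z_n)` is expressed through the equality of all its
finite-dimensional distributions with those of the `P`-chain started at `x`. -/
theorem pitman_rogers_general {𝒵 𝒳 : Type*}
    (Pi : 𝒵 → 𝒵 → ℝ≥0∞) (P : 𝒳 → 𝒳 → ℝ≥0∞) (K : 𝒳 → 𝒵 → ℝ≥0∞)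
    (Φ : 𝒵 → 𝒳)
    (hKsum : ∀ x, ∑' z, K x z = 1)
    (hKsupp : ∀ x z, Φ z ≠ x → K x z = 0)
    (hinter : ∀ x z', ∑' z, K x z * Pi z z' = ∑' x', P x x' * K x' z')
    (x : 𝒳) :
    ∀ (m : ℕ) (xs : Fin (m + 1) → 𝒳),
      (∑' zs : Fin (m + 1) → 𝒵,
          K x (zs 0) *
            (∏ k : Fin (m + 1), if Φ (zs k) = xs k then (1 : ℝ≥0∞) else 0) *
            ∏ k : Fin m, Pi (zs k.castSucc) (zs k.succ)) =
        (if xs 0 = x then (1 : ℝ≥0∞) else 0) *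
          ∏ k : Fin m, P (xs k.castSucc) (xs k.succ) := by
  intro m xs
  let fibers : Fin (m + 1) → 𝒵 → ℝ≥0∞ := fun k z => if Φ z = xs k then 1 else 0
  calc (∑' zs : Fin (m + 1) → 𝒵, K x (zs 0) * (∏ k, fibers k (zs k)) *
          ∏ k : Fin m, Pi (zs k.castSucc) (zs k.succ))
      = ∑' zs, pathWeight (K x) Pi zs * ∏ k, fibers k (zs k) :=
        tsum_congr fun zs => mul_right_comm ..
    _ = ∑' z, pathWeight (fun y => if y = x then 1 else 0) P xs * K (xs (Fin.last m)) z := by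
        rw [← tsum_forwardWeight]
        exact tsum_congr (forwardWeight_fibers_of_intertwining hKsupp hinter x m xs)
    _ = _ := by
        rw [ENNReal.tsum_mul_left, hKsum, mul_one]
        rfl

/-- The Pitman–Rogers criterion (discrete time, countable state spaces):
if the intertwining `KΠ = PK` holds and the kernel `K(x,·)` is supported on
`Φ⁻¹(x)`, then for the chain with transition matrix `Π` started from the
distribution `K(x,·)`, the image process `Φ(Z_n)` is a Markov chain with
transition matrix `P` started at `x` — expressed through the equality of all
its finite-dimensional distributions with those of the `P`-chain. -/
theorem pitman_rogers {𝒵 𝒳 : Type*} [Countable 𝒵] [Countable 𝒳]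
    (Pi : 𝒵 → 𝒵 → ℝ≥0∞) (P : 𝒳 → 𝒳 → ℝ≥0∞) (K : 𝒳 → 𝒵 → ℝ≥0∞)
    (Φ : 𝒵 → 𝒳)
    (hPi : ∀ z, ∑' z', Pi z z' = 1)
    (hP : ∀ x, ∑' x', P x x' = 1)
    (hKsum : ∀ x, ∑' z, K x z = 1)
    (hKsupp : ∀ x z, Φ z ≠ x → K x z = 0)
    (hinter : ∀ x z', ∑' z, K x z * Pi z z' = ∑' x', P x x' * K x' z')
    (x : 𝒳) :
    ∀ (m : ℕ) (xs : Fin (m + 1) → 𝒳),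
      (∑' zs : Fin (m + 1) → 𝒵,
          K x (zs 0) *
            (∏ k : Fin (m + 1), if Φ (zs k) = xs k then (1 : ℝ≥0∞) else 0) *
            ∏ k : Fin m, Pi (zs k.castSucc) (zs k.succ)) =
        (if xs 0 = x then (1 : ℝ≥0∞) else 0) *
          ∏ k : Fin m, P (xs k.castSucc) (xs k.succ) :=
  pitman_rogers_general Pi P K Φ hKsum hKsupp hinter x
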